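/- arXiv:1702.07171 — 8 statements merged into one kernel-verified Lean document; each statement's English description precedes it below -/
import Mathlib

section
/- Let n ∈ ℕ and let N be a Hausdorff, second-countable, finite-dimensional smooth manifold without boundary modeled on the Euclidean space ℝⁿ. Then for every y ∈ N there exist an open set U ⊆ N with y ∈ U, a smooth map φ : N → ℝⁿ whose topological support is compact, and a smooth map φ* : ℝⁿ → N such that the closure of {x ∈ ℝⁿ : φ*(x) ≠ y} is compact, φ is injective on U, and φ*(φ(z)) = z for every z ∈ U. -/
/-!
`φ` is the extended chart at `y` multiplied by a smooth bump function equal to `1` near `y`.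
`φ*` is the inverse chart precomposed with a smooth radial contraction of `ℝⁿ` into a closed ball
inside the chart target, equal to the identity near the centre and constant (with value the centre)
outside a larger ball. Near `y` these agree with the chart and its inverse, so `φ* ∘ φ = id` on a
neighbourhood of `y`, which also gives injectivity of `φ` there.
-/

open scoped Manifold Topology ContDiff
open Metric Set Function Filter

namespace ContDiffBump

variable {E : Type*} [NormedAddCommGroup E] [NormedSpace ℝ E] [HasContDiffBump E] {c : E}
  (χ : ContDiffBump c)

noncomputable def squeeze (x : E) : E := c + χ x • (x - c)

theorem contDiff_squeeze {n : ℕ∞} : ContDiff ℝ n χ.squeeze :=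
  contDiff_const.add (χ.contDiff.smul (contDiff_id.sub contDiff_const))

theorem squeeze_of_notMem_ball {x : E} (hx : x ∉ ball c χ.rOut) : χ.squeeze x = c := by
  rw [squeeze, χ.zero_of_le_dist (not_lt.1 hx), zero_smul, add_zero]

theorem squeeze_of_mem_closedBall {x : E} (hx : x ∈ closedBall c χ.rIn) : χ.squeeze x = x := by
  rw [squeeze, χ.one_of_mem_closedBall hx, one_smul, add_sub_cancel]

theorem squeeze_eventuallyEq_id : χ.squeeze =ᶠ[𝓝 c] id :=
  mem_of_superset (closedBall_mem_nhds c χ.rIn_pos) fun _ ↦ χ.squeeze_of_mem_closedBall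

theorem squeeze_mem_closedBall (x : E) : χ.squeeze x ∈ closedBall c χ.rOut := by
  by_cases hx : x ∈ ball c χ.rOut
  · rw [mem_closedBall, dist_eq_norm, squeeze, add_sub_cancel_left, norm_smul,
      Real.norm_of_nonneg χ.nonneg]
    calc χ x * ‖x - c‖ ≤ 1 * ‖x - c‖ := mul_le_mul_of_nonneg_right χ.le_one (norm_nonneg _)
      _ ≤ χ.rOut := by rw [one_mul, ← dist_eq_norm]; exact hx.le
  · rw [χ.squeeze_of_notMem_ball hx]
    exact mem_closedBall_self χ.rOut_pos.le

end ContDiffBump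

section ExtendedCharts

variable {E H M : Type*} [NormedAddCommGroup E] [NormedSpace ℝ E] [FiniteDimensional ℝ E]
  [TopologicalSpace H] {I : ModelWithCorners ℝ E H} [TopologicalSpace M] [ChartedSpace H M]
  [IsManifold I ∞ M]

theorem exists_contMDiff_hasCompactSupport_eventuallyEq_extChartAt [T2Space M] (y : M) :
    ∃ φ : M → E, ContMDiff I 𝓘(ℝ, E) ∞ φ ∧ HasCompactSupport φ ∧
      φ =ᶠ[𝓝 y] extChartAt I y := by
  obtain ⟨f⟩ : Nonempty (SmoothBumpFunction I y) := inferInstance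
  refine ⟨fun z ↦ f z • extChartAt I y z, f.contMDiff_smul contMDiffOn_extChartAt,
    f.hasCompactSupport.mono (support_smul_subset_left _ _), ?_⟩
  filter_upwards [f.eventuallyEq_one] with z hz
  rw [hz, Pi.one_apply, one_smul]

theorem exists_contMDiff_isCompact_closure_ne_eventuallyEq_extChartAt_symm [I.Boundaryless]
    (y : M) :
    ∃ ψ : E → M, ContMDiff 𝓘(ℝ, E) I ∞ ψ ∧ IsCompact (closure {x | ψ x ≠ y}) ∧
      ψ =ᶠ[𝓝 (extChartAt I y y)] (extChartAt I y).symm := by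
  obtain ⟨ε, hε, hball⟩ := nhds_basis_closedBall.mem_iff.1 (extChartAt_target_mem_nhds (I := I) y)
  let χ : ContDiffBump (extChartAt I y y) := ⟨ε / 2, ε, by positivity, by linarith⟩
  refine ⟨(extChartAt I y).symm ∘ χ.squeeze, ?_, ?_, χ.squeeze_eventuallyEq_id.fun_comp (extChartAt I y).symm⟩
  · exact (contMDiffOn_extChartAt_symm y).comp_contMDiff χ.contDiff_squeeze.contMDiff
      fun x ↦ hball (χ.squeeze_mem_closedBall x)
  · refine (isCompact_closedBall (extChartAt I y y) ε).closure_of_subset fun x hx ↦ ball_subset_closedBall ?_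
    by_contra hxb
    exact hx (by rw [comp_apply, χ.squeeze_of_notMem_ball hxb, extChartAt_to_inv])

end ExtendedCharts

theorem extended_local_charts_general (n : ℕ) {N : Type*} [TopologicalSpace N] [T2Space N]
    [ChartedSpace (EuclideanSpace ℝ (Fin n)) N]
    [IsManifold (𝓡 n) (⊤ : ℕ∞) N] (y : N) :
    ∃ (U : Set N) (φ : N → EuclideanSpace ℝ (Fin n)) (φstar : EuclideanSpace ℝ (Fin n) → N),
      IsOpen U ∧ y ∈ U ∧
      ContMDiff (𝓡 n) (𝓡 n) (⊤ : ℕ∞) φ ∧ HasCompactSupport φ ∧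
      ContMDiff (𝓡 n) (𝓡 n) (⊤ : ℕ∞) φstar ∧
      IsCompact (closure {x : EuclideanSpace ℝ (Fin n) | φstar x ≠ y}) ∧
      Set.InjOn φ U ∧
      ∀ z ∈ U, φstar (φ z) = z := by
  obtain ⟨φ, hφ, hφ_supp, hφ_chart⟩ :=
    exists_contMDiff_hasCompactSupport_eventuallyEq_extChartAt (I := 𝓡 n) y
  obtain ⟨ψ, hψ, hψ_supp, hψ_chart⟩ :=
    exists_contMDiff_isCompact_closure_ne_eventuallyEq_extChartAt_symm (I := 𝓡 n) y
  have hφ_tendsto : Tendsto φ (𝓝 y) (𝓝 (extChartAt (𝓡 n) y y)) := by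
    rw [← hφ_chart.eq_of_nhds]
    exact hφ.continuous.continuousAt
  have hleft : ∀ᶠ z in 𝓝 y, ψ (φ z) = z := by
    filter_upwards [hφ_chart, hφ_tendsto.eventually hψ_chart, extChartAt_source_mem_nhds (I := 𝓡 n) y]
      with z hφz hψφz hz
    rw [hψφz, hφz, (extChartAt (𝓡 n) y).left_inv hz]
  obtain ⟨U, hU, hU_open, hyU⟩ := eventually_nhds_iff.1 hleft
  exact ⟨U, φ, ψ, hU_open, hyU, hφ, hφ_supp, hψ, hψ_supp, LeftInvOn.injOn hU, hU⟩

/-- **Extended local charts.** For every point `y` of a Hausdorff, second-countable,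
boundaryless smooth `n`-manifold `N`, there exist an open set `U ∋ y`, a smooth,
compactly supported map `φ : N → ℝⁿ`, and a smooth map `φ* : ℝⁿ → N` such that
the closure of `{x : φ* x ≠ y}` is compact, `φ` is injective on `U`, and
`φ* ∘ φ = id` on `U`. -/
theorem extended_local_charts (n : ℕ) {N : Type*} [TopologicalSpace N] [T2Space N]
    [SecondCountableTopology N] [ChartedSpace (EuclideanSpace ℝ (Fin n)) N]
    [IsManifold (𝓡 n) (⊤ : ℕ∞) N] (y : N) :
    ∃ (U : Set N) (φ : N → EuclideanSpace ℝ (Fin n)) (φstar : EuclideanSpace ℝ (Fin n) → N),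
      IsOpen U ∧ y ∈ U ∧
      ContMDiff (𝓡 n) (𝓡 n) (⊤ : ℕ∞) φ ∧ HasCompactSupport φ ∧
      ContMDiff (𝓡 n) (𝓡 n) (⊤ : ℕ∞) φstar ∧
      IsCompact (closure {x : EuclideanSpace ℝ (Fin n) | φstar x ≠ y}) ∧
      Set.InjOn φ U ∧
      ∀ z ∈ U, φstar (φ z) = z :=
  extended_local_charts_general n y
end

section
/- Let E be a finite-dimensional real normed vector space and let Φ : E × E × E → ℝ be a map such that (i) for every e₁ ∈ E, the map (e₂, e₁₂) ↦ Φ(e₁, e₂, e₁₂) is a seminorm on E × E, and (ii) for every e₂ ∈ E, the map (e₁, e₁₂) ↦ Φ(e₁, e₂, e₁₂) is a seminorm on E × E. Then there exists C ≥ 0 such that Φ(e₁, e₂, e₁₂) ≤ C (‖e₁‖ ‖e₂‖ + ‖e₁₂‖) for all e₁, e₂, e₁₂ ∈ E. -/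
/-!
Subadditivity in the second slot gives `Φ(e₁, e₂, e₁₂) ≤ Φ(e₁, e₂, 0) + Φ(e₁, 0, e₁₂)`, and
subadditivity in the first slot gives `Φ(e₁, 0, e₁₂) ≤ Φ(e₁, 0, 0) + Φ(0, 0, e₁₂) = Φ(0, 0, e₁₂)`.
In finite dimensions a seminorm is convex, hence continuous, hence at most a multiple of the norm;
this bounds `Φ(0, 0, ·)`. The map `(e₁, e₂) ↦ Φ(e₁, e₂, 0)` is a seminorm in each variable, so the
seminorms `Φ(e₁, ·, 0)` with `‖e₁‖ ≤ 1` are pointwise bounded; their supremum is again a seminorm,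
which gives the bound `C ‖e₁‖ ‖e₂‖`.
-/

namespace Seminorm

variable {E : Type*} [NormedAddCommGroup E] [NormedSpace ℝ E]

theorem bound_of_finiteDimensional [FiniteDimensional ℝ E] (p : Seminorm ℝ E) :
    ∃ C, 0 < C ∧ ∀ x, p x ≤ C * ‖x‖ :=
  p.bound_of_continuous_normedSpace p.convexOn.locallyLipschitz.continuous

theorem uniform_bound_of_bddAbove [FiniteDimensional ℝ E] {ι : Sort*} {p : ι → Seminorm ℝ E}
    (hp : ∀ x, BddAbove (Set.range fun i => p i x)) :
    ∃ C, 0 < C ∧ ∀ i x, p i x ≤ C * ‖x‖ := by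
  have hbdd : BddAbove (Set.range p) := Seminorm.bddAbove_range_iff.2 hp
  obtain ⟨C, hC, hbound⟩ := (⨆ i, p i).bound_of_finiteDimensional
  refine ⟨C, hC, fun i x => le_trans ?_ (hbound x)⟩
  rw [Seminorm.iSup_apply hbdd]
  exact le_ciSup (hp x) i

theorem le_mul_norm_of_forall_norm_le_one (p : Seminorm ℝ E) {D : ℝ}
    (h : ∀ x, ‖x‖ ≤ 1 → p x ≤ D) (x : E) : p x ≤ D * ‖x‖ := by
  rcases eq_or_ne x 0 with rfl | hx
  · simp
  have hx' : 0 < ‖x‖ := norm_pos_iff.2 hx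
  calc p x = ‖x‖ * p (‖x‖⁻¹ • x) := by
        rw [map_smul_eq_mul, norm_inv, norm_norm, mul_inv_cancel_left₀ hx'.ne']
    _ ≤ ‖x‖ * D := by gcongr; exact h _ (norm_smul_inv_norm hx).le
    _ = D * ‖x‖ := mul_comm _ _

end Seminorm

theorem exists_le_mul_norm_mul_norm_of_separately_seminorm
    {E F : Type*} [NormedAddCommGroup E] [NormedSpace ℝ E] [FiniteDimensional ℝ E]
    [NormedAddCommGroup F] [NormedSpace ℝ F] [FiniteDimensional ℝ F]
    (p : E → Seminorm ℝ F) (p' : F → Seminorm ℝ E) (hpp' : ∀ x y, p x y = p' y x) :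
    ∃ C, 0 < C ∧ ∀ x y, p x y ≤ C * (‖x‖ * ‖y‖) := by
  have hbdd : ∀ y, BddAbove (Set.range fun x : Metric.closedBall (0 : E) 1 => p x y) := by
    intro y
    obtain ⟨K, hK, hbound⟩ := (p' y).bound_of_finiteDimensional
    refine ⟨K, ?_⟩
    rintro _ ⟨⟨x, hx⟩, rfl⟩
    rw [mem_closedBall_zero_iff] at hx
    calc p x y = p' y x := hpp' x y
      _ ≤ K * ‖x‖ := hbound x
      _ ≤ K := mul_le_of_le_one_right hK.le hx
  obtain ⟨C, hC, hbound⟩ := Seminorm.uniform_bound_of_bddAbove hbdd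
  refine ⟨C, hC, fun x y => ?_⟩
  have hscaled := (p' y).le_mul_norm_of_forall_norm_le_one (D := C * ‖y‖) fun x hx => by
    rw [← hpp']; exact hbound ⟨x, mem_closedBall_zero_iff.2 hx⟩ y
  rw [hpp']
  exact (hscaled x).trans_eq (by ring)

/-- Every double seminorm on the flat second-order tangent bundle
`T²ℝᵐ = ℝᵐ × E × E × E` (a map `Φ` that is a seminorm in `(e₂, e₁₂)` for fixed `e₁`,
and a seminorm in `(e₁, e₁₂)` for fixed `e₂`) is dominated by the canonical double
seminorm `(e₁, e₂, e₁₂) ↦ ‖e₁‖‖e₂‖ + ‖e₁₂‖`. -/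
theorem double_seminorm_le_canonical {E : Type*} [NormedAddCommGroup E] [NormedSpace ℝ E]
    [FiniteDimensional ℝ E] (Φ : E → E → E → ℝ)
    (hom₂ : ∀ (e₁ : E) (c : ℝ) (e₂ e₁₂ : E), Φ e₁ (c • e₂) (c • e₁₂) = |c| * Φ e₁ e₂ e₁₂)
    (add₂ : ∀ (e₁ e₂ e₂' e₁₂ e₁₂' : E),
      Φ e₁ (e₂ + e₂') (e₁₂ + e₁₂') ≤ Φ e₁ e₂ e₁₂ + Φ e₁ e₂' e₁₂')
    (hom₁ : ∀ (e₂ : E) (c : ℝ) (e₁ e₁₂ : E), Φ (c • e₁) e₂ (c • e₁₂) = |c| * Φ e₁ e₂ e₁₂)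
    (add₁ : ∀ (e₂ e₁ e₁' e₁₂ e₁₂' : E),
      Φ (e₁ + e₁') e₂ (e₁₂ + e₁₂') ≤ Φ e₁ e₂ e₁₂ + Φ e₁' e₂ e₁₂') :
    ∃ C : ℝ, 0 ≤ C ∧ ∀ (e₁ e₂ e₁₂ : E), Φ e₁ e₂ e₁₂ ≤ C * (‖e₁‖ * ‖e₂‖ + ‖e₁₂‖) := by
  let P₁ (e₁ : E) : Seminorm ℝ (E × E) :=
    .of (fun v => Φ e₁ v.1 v.2) (fun v w => add₂ e₁ v.1 w.1 v.2 w.2) fun c v => hom₂ e₁ c v.1 v.2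
  let P₂ (e₂ : E) : Seminorm ℝ (E × E) :=
    .of (fun v => Φ v.1 e₂ v.2) (fun v w => add₁ e₂ v.1 w.1 v.2 w.2) fun c v => hom₁ e₂ c v.1 v.2
  obtain ⟨B, hB, hbilin⟩ := exists_le_mul_norm_mul_norm_of_separately_seminorm
    (fun e₁ => (P₁ e₁).comp (.inl ℝ E E)) (fun e₂ => (P₂ e₂).comp (.inl ℝ E E)) fun _ _ => rfl
  obtain ⟨L, hL, hlin⟩ := ((P₁ 0).comp (.inr ℝ E E)).bound_of_finiteDimensional
  have hzero (e₁ : E) : Φ e₁ 0 0 = 0 := map_zero (P₁ e₁)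
  refine ⟨B + L, by positivity, fun e₁ e₂ e₁₂ => ?_⟩
  calc Φ e₁ e₂ e₁₂ ≤ Φ e₁ e₂ 0 + Φ e₁ 0 e₁₂ := by simpa using add₂ e₁ e₂ 0 0 e₁₂
    _ ≤ Φ e₁ e₂ 0 + (Φ e₁ 0 0 + Φ 0 0 e₁₂) := by gcongr; simpa using add₁ 0 e₁ 0 0 e₁₂
    _ ≤ B * (‖e₁‖ * ‖e₂‖) + L * ‖e₁₂‖ := by
        rw [hzero, zero_add]; exact add_le_add (hbilin e₁ e₂) (hlin e₁₂)
    _ ≤ (B + L) * (‖e₁‖ * ‖e₂‖ + ‖e₁₂‖) := by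
        nlinarith [norm_nonneg e₁₂, mul_nonneg (norm_nonneg e₁) (norm_nonneg e₂)]
end

section
/- Let (X, μ) be a measure space with μ a finite measure satisfying 0 < μ(X) < ∞, let q ∈ (1, ∞) be a real number, and let C₁ ≥ 0 and ε > 0 be real. Then there exists C > 0 such that: for every measurable function v : X → ℝ with ∫_X |v|^q dμ < ∞, every real G ≥ 0 satisfying (∫_X |v|^q dμ)^{1/q} ≤ C₁ · G + μ(X)^{1/q − 1} · ∫_X |v| dμ, and every measurable set A ⊆ X with μ(A) > ε, one has (∫_X |v|^q dμ)^{1/q} ≤ C · (G + μ(A)⁻¹ · ∫_A |v| dμ). -/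
/-!
Split `∫ |v|` over `A` and `Aᶜ`. By Hölder, `μ(X)^{1/q-1} ∫_{Aᶜ} |v| ≤ (μ(Aᶜ)/μ(X))^{1-1/q} ‖v‖_q`,
and `μ(A) > ε` bounds this factor by `θ = (1 - min ε μ(X) / μ(X))^{1-1/q} < 1`, so the `Aᶜ` part
is absorbed into the left-hand side. The `A` part is at most `μ(X)^{1/q}` times the average of
`|v|` over `A`, which gives `C = max C₁ μ(X)^{1/q} / (1 - θ)`.
-/

open MeasureTheory Set

theorem memLp_ofReal_iff_integrable_abs_rpow {X : Type*} [MeasurableSpace X] {μ : Measure X}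
    {q : ℝ} (hq : 0 < q) {f : X → ℝ} (hf : AEStronglyMeasurable f μ) :
    MemLp f (ENNReal.ofReal q) μ ↔ Integrable (fun x => |f x| ^ q) μ := by
  rw [← integrable_norm_rpow_iff hf (by simpa using hq) ENNReal.ofReal_ne_top,
    ENNReal.toReal_ofReal hq.le]
  simp only [Real.norm_eq_abs]

theorem setIntegral_abs_le_measureReal_rpow_mul {X : Type*} [MeasurableSpace X] {μ : Measure X}
    [IsFiniteMeasure μ] {q : ℝ} (hq : 1 < q) {f : X → ℝ} (hf : MemLp f (ENNReal.ofReal q) μ)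
    (s : Set X) :
    ∫ x in s, |f x| ∂μ ≤ μ.real s ^ (1 - 1 / q) * (∫ x, |f x| ^ q ∂μ) ^ (1 / q) := by
  have hpq : (Real.conjExponent q).HolderConjugate q := (Real.HolderConjugate.conjExponent hq).symm
  have hholder := integral_mul_le_Lp_mul_Lq_of_nonneg (μ := μ.restrict s) hpq
    (f := fun _ => 1) (g := fun x => |f x|) (ae_of_all _ fun _ => zero_le_one)
    (ae_of_all _ fun _ => abs_nonneg _) (memLp_const 1) (hf.abs.restrict s)
  have hint : Integrable (fun x => |f x| ^ q) μ :=
    (memLp_ofReal_iff_integrable_abs_rpow (by linarith) hf.1).1 hf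
  calc ∫ x in s, |f x| ∂μ
      ≤ μ.real s ^ (1 / Real.conjExponent q) * (∫ x in s, |f x| ^ q ∂μ) ^ (1 / q) := by
        simpa using hholder
    _ ≤ μ.real s ^ (1 - 1 / q) * (∫ x, |f x| ^ q ∂μ) ^ (1 / q) := by
        rw [one_div (Real.conjExponent q), ← hpq.symm.one_sub_inv, ← one_div]
        gcongr
        exacts [ae_of_all _ fun _ => by positivity, Measure.restrict_le_self]

theorem rpow_neg_mul_rpow_sub_le {m a e r : ℝ} (hm : 0 < m) (hr : 0 ≤ r) (hea : e ≤ a)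
    (ham : a ≤ m) : m ^ (-r) * (m - a) ^ r ≤ (1 - e / m) ^ r := by
  rw [Real.rpow_neg hm.le, ← div_eq_inv_mul, ← Real.div_rpow (by linarith) hm.le, sub_div,
    div_self hm.ne']
  gcongr
  linarith [div_le_one_of_le₀ ham hm.le]

theorem rpow_sub_one_mul_setIntegral_compl_le {X : Type*} [MeasurableSpace X] {μ : Measure X}
    [IsFiniteMeasure μ] (hμ : 0 < μ.real univ) {q : ℝ} (hq : 1 < q) {f : X → ℝ}
    (hf : MemLp f (ENNReal.ofReal q) μ) {s : Set X} (hs : MeasurableSet s) {e : ℝ}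
    (he : e ≤ μ.real s) :
    μ.real univ ^ (1 / q - 1) * ∫ x in sᶜ, |f x| ∂μ ≤
      (1 - e / μ.real univ) ^ (1 - 1 / q) * (∫ x, |f x| ^ q ∂μ) ^ (1 / q) := by
  have hq' : 1 / q ≤ 1 := (div_le_one (by linarith)).2 hq.le
  calc μ.real univ ^ (1 / q - 1) * ∫ x in sᶜ, |f x| ∂μ
      ≤ μ.real univ ^ (1 / q - 1) * (μ.real sᶜ ^ (1 - 1 / q) * (∫ x, |f x| ^ q ∂μ) ^ (1 / q)) := by
        gcongr; exact setIntegral_abs_le_measureReal_rpow_mul hq hf sᶜ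
    _ = μ.real univ ^ (-(1 - 1 / q)) * (μ.real univ - μ.real s) ^ (1 - 1 / q) *
          (∫ x, |f x| ^ q ∂μ) ^ (1 / q) := by
        rw [measureReal_compl hs, neg_sub]; ring
    _ ≤ (1 - e / μ.real univ) ^ (1 - 1 / q) * (∫ x, |f x| ^ q ∂μ) ^ (1 / q) := by
        gcongr
        exact rpow_neg_mul_rpow_sub_le hμ (by linarith) he (measureReal_mono (subset_univ s))

theorem rpow_sub_one_mul_le_rpow {m a r : ℝ} (hm : 0 < m) (ham : a ≤ m) :
    m ^ (r - 1) * a ≤ m ^ r := by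
  rw [Real.rpow_sub_one hm.ne', div_mul_eq_mul_div, div_le_iff₀ hm]
  gcongr

theorem poincare_average_general {X : Type*} [MeasurableSpace X] (μ : Measure X) [IsFiniteMeasure μ]
    (hX : 0 < μ Set.univ) (q : ℝ) (hq : 1 < q) (C₁ : ℝ)
    (ε : ℝ) (hε : 0 < ε) :
    ∃ C : ℝ, 0 < C ∧ ∀ (v : X → ℝ), Measurable v →
      Integrable (fun x => |v x| ^ q) μ →
      ∀ G : ℝ, 0 ≤ G →
      (∫ x, |v x| ^ q ∂μ) ^ (1 / q) ≤
        C₁ * G + (μ Set.univ).toReal ^ (1 / q - 1) * ∫ x, |v x| ∂μ →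
      ∀ A : Set X, MeasurableSet A → ε < (μ A).toReal →
      (∫ x, |v x| ^ q ∂μ) ^ (1 / q) ≤
        C * (G + ((μ A).toReal)⁻¹ * ∫ x in A, |v x| ∂μ) := by
  simp only [← measureReal_def]
  set m := μ.real univ
  have hm : 0 < m := ENNReal.toReal_pos hX.ne' (measure_ne_top μ _)
  have hq' : 1 / q < 1 := (div_lt_one (by linarith)).2 hq
  set θ := (1 - min ε m / m) ^ (1 - 1 / q)
  have hθ : θ < 1 := Real.rpow_lt_one (by simp [div_le_one_of_le₀ (min_le_right ε m) hm.le])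
    (sub_lt_self _ (by positivity)) (by linarith)
  refine ⟨max C₁ (m ^ (1 / q)) / (1 - θ),
    div_pos (lt_max_of_lt_right (by positivity)) (sub_pos.2 hθ), ?_⟩
  intro v hv hint G hG hP A hA hAε
  set N := (∫ x, |v x| ^ q ∂μ) ^ (1 / q)
  set t := (μ.real A)⁻¹ * ∫ x in A, |v x| ∂μ
  have hvq : MemLp v (ENNReal.ofReal q) μ :=
    (memLp_ofReal_iff_integrable_abs_rpow (by linarith) hv.aestronglyMeasurable).2 hint
  have hcompl : m ^ (1 / q - 1) * ∫ x in Aᶜ, |v x| ∂μ ≤ θ * N :=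
    rpow_sub_one_mul_setIntegral_compl_le hm hq hvq hA ((min_le_left ε m).trans hAε.le)
  have hset : m ^ (1 / q - 1) * ∫ x in A, |v x| ∂μ ≤ m ^ (1 / q) * t :=
    calc m ^ (1 / q - 1) * ∫ x in A, |v x| ∂μ
        = m ^ (1 / q - 1) * μ.real A * t := by
          simp only [t]; field_simp [(hε.trans hAε).ne']
      _ ≤ m ^ (1 / q) * t := by
          gcongr
          exact rpow_sub_one_mul_le_rpow hm (measureReal_mono (subset_univ A))
  have hv1 : Integrable (fun x => |v x|) μ :=
    (hvq.integrable (ENNReal.one_le_ofReal.2 hq.le)).abs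
  rw [← integral_add_compl hA hv1, mul_add] at hP
  have hmax : C₁ * G + m ^ (1 / q) * t ≤ max C₁ (m ^ (1 / q)) * (G + t) := by
    rw [mul_add]
    gcongr
    exacts [le_max_left _ _, le_max_right _ _]
  rw [div_mul_eq_mul_div, le_div_iff₀ (sub_pos.2 hθ)]
  linarith

/-- Abstract Poincaré inequality with averaged term: on a finite measure space of
positive mass, if a function `v` with `∫ |v|^q < ∞` satisfies the classical
Poincaré inequality `‖v‖_q ≤ C₁ G + μ(X)^{1/q - 1} ∫ |v|`, then for any measurable
set `A` of measure greater than `ε` one has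
`‖v‖_q ≤ C (G + μ(A)⁻¹ ∫_A |v|)`, with `C` depending only on `μ(X)`, `q`, `C₁`, `ε`. -/
theorem poincare_average {X : Type*} [MeasurableSpace X] (μ : Measure X) [IsFiniteMeasure μ]
    (hX : 0 < μ Set.univ) (q : ℝ) (hq : 1 < q) (C₁ : ℝ) (hC₁ : 0 ≤ C₁)
    (ε : ℝ) (hε : 0 < ε) :
    ∃ C : ℝ, 0 < C ∧ ∀ (v : X → ℝ), Measurable v →
      Integrable (fun x => |v x| ^ q) μ →
      ∀ G : ℝ, 0 ≤ G →
      (∫ x, |v x| ^ q ∂μ) ^ (1 / q) ≤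
        C₁ * G + (μ Set.univ).toReal ^ (1 / q - 1) * ∫ x, |v x| ∂μ →
      ∀ A : Set X, MeasurableSet A → ε < (μ A).toReal →
      (∫ x, |v x| ^ q ∂μ) ^ (1 / q) ≤
        C * (G + ((μ A).toReal)⁻¹ * ∫ x in A, |v x| ∂μ) :=
  poincare_average_general μ hX q hq C₁ ε hε
end

section
/- Let E be a real normed vector space and let v : E → ℝ be of class C² (ContDiff ℝ 2 v). Define the circle-valued lift u : E → ℝ² by u(x) = (cos(v(x)), sin(v(x))). Then for every x ∈ E and every e, e' ∈ E, ‖(iteratedFDeriv ℝ 2 u x)(e, e')‖² = ((iteratedFDeriv ℝ 2 v x)(e, e'))² + ((fderiv ℝ v x)(e) · (fderiv ℝ v x)(e'))². -/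
/-!
Writing `u = c ∘ v` with `c t = (cos t, sin t)`, the chain rule twice gives
`D²u[e,e'] = Dv[e] Dv[e'] • c''(v) + D²v[e,e'] • c'(v)`. Since `c'' = -c` and `c'` is the unit
tangent, `c(t)` and `c'(t)` form an orthonormal basis of `ℝ²`, so the squared norm is the sum of
the squares of the two coefficients.
-/

/-- The circle-valued lift `u(x) = (cos (v x), sin (v x)) ∈ ℝ²` of `v : E → ℝ`,
where `ℝ² = EuclideanSpace ℝ (Fin 2)`. -/
noncomputable def circleLift {E : Type*} (v : E → ℝ) (x : E) : EuclideanSpace ℝ (Fin 2) :=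
  (WithLp.equiv 2 (Fin 2 → ℝ)).symm ![Real.cos (v x), Real.sin (v x)]

open Real

theorem iteratedFDeriv_two_comp_apply {E F : Type*} [NormedAddCommGroup E] [NormedSpace ℝ E]
    [NormedAddCommGroup F] [NormedSpace ℝ F] {g g' g'' : ℝ → F}
    (hg : ∀ t, HasDerivAt g (g' t) t) (hg' : ∀ t, HasDerivAt g' (g'' t) t)
    {v : E → ℝ} (hv : ContDiff ℝ 2 v) (x e e' : E) :
    iteratedFDeriv ℝ 2 (g ∘ v) x ![e, e'] =
      (fderiv ℝ v x e * fderiv ℝ v x e') • g'' (v x) +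
        iteratedFDeriv ℝ 2 v x ![e, e'] • g' (v x) := by
  have hv' : Differentiable ℝ v := hv.differentiable two_ne_zero
  have hDv : Differentiable ℝ (fderiv ℝ v) :=
    (hv.fderiv_right (m := 1) le_rfl).differentiable one_ne_zero
  have hD : fderiv ℝ (g ∘ v) = fun y => (fderiv ℝ v y).smulRight (g' (v y)) := by
    funext y
    rw [((hg (v y)).hasFDerivAt.comp y (hv' y).hasFDerivAt).fderiv]
    ext w
    simp
  have hD2 : HasFDerivAt (fun y => (fderiv ℝ v y).smulRight (g' (v y))) _ x :=
    (ContinuousLinearMap.smulRightL ℝ E F).hasFDerivAt_of_bilinear (hDv x).hasFDerivAt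
      ((hg' (v x)).hasFDerivAt.comp x (hv' x).hasFDerivAt)
  rw [iteratedFDeriv_two_apply, iteratedFDeriv_two_apply, hD, hD2.fderiv]
  simp [mul_smul]

theorem HasDerivAt.toLp {𝕜 : Type*} [NontriviallyNormedField 𝕜] (p : ENNReal) [Fact (1 ≤ p)]
    {ι : Type*} [Fintype ι] {E : ι → Type*} [∀ i, NormedAddCommGroup (E i)]
    [∀ i, NormedSpace 𝕜 (E i)] {f : 𝕜 → ∀ i, E i} {f' : ∀ i, E i} {t : 𝕜}
    (hf : HasDerivAt f f' t) : HasDerivAt (fun s => WithLp.toLp p (f s)) (WithLp.toLp p f') t :=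
  (PiLp.hasFDerivAt_toLp p (f t)).comp_hasDerivAt t hf

theorem hasDerivAt_vecCons_two {𝕜 F : Type*} [NontriviallyNormedField 𝕜] [NormedAddCommGroup F]
    [NormedSpace 𝕜 F] {f₁ f₂ : 𝕜 → F} {a b : F} {t : 𝕜} (h₁ : HasDerivAt f₁ a t)
    (h₂ : HasDerivAt f₂ b t) : HasDerivAt (fun s => ![f₁ s, f₂ s]) ![a, b] t :=
  hasDerivAt_pi.2 fun i => by fin_cases i <;> assumption

noncomputable def circlePoint (t : ℝ) : EuclideanSpace ℝ (Fin 2) := !₂[cos t, sin t]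

noncomputable def circleTangent (t : ℝ) : EuclideanSpace ℝ (Fin 2) := !₂[-sin t, cos t]

theorem circleLift_eq_comp {E : Type*} (v : E → ℝ) : circleLift v = circlePoint ∘ v := rfl

theorem hasDerivAt_circlePoint (t : ℝ) : HasDerivAt circlePoint (circleTangent t) t :=
  (hasDerivAt_vecCons_two (hasDerivAt_cos t) (hasDerivAt_sin t)).toLp 2

theorem hasDerivAt_circleTangent (t : ℝ) : HasDerivAt circleTangent (-circlePoint t) t := by
  have h := (hasDerivAt_vecCons_two (hasDerivAt_sin t).fun_neg (hasDerivAt_cos t)).toLp 2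
  rwa [circlePoint, ← WithLp.toLp_neg, Matrix.neg_cons, Matrix.neg_cons, Matrix.neg_empty]

theorem norm_smul_circlePoint_add_smul_circleTangent_sq (a b t : ℝ) :
    ‖a • circlePoint t + b • circleTangent t‖ ^ 2 = a ^ 2 + b ^ 2 := by
  rw [EuclideanSpace.norm_sq_eq]
  simp only [circlePoint, circleTangent, PiLp.add_apply, PiLp.smul_apply, smul_eq_mul,
    norm_eq_abs, sq_abs, Fin.sum_univ_two, Matrix.cons_val_zero, mul_neg, Matrix.cons_val_one,
    Matrix.cons_val_fin_one]
  linear_combination (a ^ 2 + b ^ 2) * sin_sq_add_cos_sq t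

/-- Euclidean decomposition of the second derivative of a circle-valued map: if
`v : E → ℝ` is `C²` and `u = (cos ∘ v, sin ∘ v)`, then for all `e, e'`,
`‖D²u(x)[e,e']‖² = (D²v(x)[e,e'])² + (Dv(x)[e] · Dv(x)[e'])²`. -/
theorem circleLift_iteratedFDeriv_two_sq {E : Type*} [NormedAddCommGroup E] [NormedSpace ℝ E]
    (v : E → ℝ) (hv : ContDiff ℝ 2 v) (x : E) (e e' : E) :
    ‖(iteratedFDeriv ℝ 2 (circleLift v) x) ![e, e']‖ ^ 2 =
      ((iteratedFDeriv ℝ 2 v x) ![e, e']) ^ 2 +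
        ((fderiv ℝ v x e) * (fderiv ℝ v x e')) ^ 2 := by
  rw [circleLift_eq_comp,
    iteratedFDeriv_two_comp_apply hasDerivAt_circlePoint hasDerivAt_circleTangent hv, smul_neg,
    ← neg_smul, norm_smul_circlePoint_add_smul_circleTangent_sq, neg_sq, add_comm]
end

section
/- Let m ≥ 1 be an integer and α > 0 a real number. Define u : ℝ^m → ℝ² by u(x) = (cos(‖x‖^{−α}), sin(‖x‖^{−α})), where ℝ² = EuclideanSpace ℝ (Fin 2) carries the Euclidean norm. Then for every x ∈ ℝ^m with x ≠ 0, u is differentiable at x and ‖fderiv ℝ u x‖ = α · ‖x‖^{−α−1}. -/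
open Real

section NormRpow

variable {E : Type*} [NormedAddCommGroup E] [NormedSpace ℝ E] {x : E}

theorem hasFDerivAt_norm_rpow_of_differentiableAt (hx : x ≠ 0)
    (h : DifferentiableAt ℝ (‖·‖) x) (p : ℝ) :
    HasFDerivAt (fun y : E => ‖y‖ ^ p) ((p * ‖x‖ ^ (p - 1)) • fderiv ℝ (‖·‖) x) x :=
  (hasDerivAt_rpow_const (Or.inl (norm_ne_zero_iff.2 hx))).comp_hasFDerivAt x h.hasFDerivAt

theorem norm_fderiv_norm_rpow_of_differentiableAt (hx : x ≠ 0)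
    (h : DifferentiableAt ℝ (‖·‖) x) (p : ℝ) :
    ‖fderiv ℝ (fun y : E => ‖y‖ ^ p) x‖ = |p| * ‖x‖ ^ (p - 1) := by
  have : Nontrivial E := ⟨x, 0, hx⟩
  rw [(hasFDerivAt_norm_rpow_of_differentiableAt hx h p).fderiv, norm_smul, norm_fderiv_norm h,
    mul_one, norm_mul, norm_eq_abs, norm_of_nonneg (rpow_nonneg (norm_nonneg x) _)]

end NormRpow

theorem norm_circleLift {E : Type*} (v : E → ℝ) (x : E) : ‖circleLift v x‖ = 1 := by
  rw [circleLift, EuclideanSpace.norm_eq]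
  simp [Fin.sum_univ_two, cos_sq_add_sin_sq]

theorem hasDerivAt_circleLift_id (t : ℝ) :
    HasDerivAt (circleLift id) (circleLift (· + π / 2) t) t := by
  have hpi : HasDerivAt (fun s : ℝ => ![cos s, sin s]) ![-sin t, cos t] t := by
    rw [hasDerivAt_pi]
    intro i
    fin_cases i
    · simpa using hasDerivAt_cos t
    · simpa using hasDerivAt_sin t
  have hrot : circleLift (· + π / 2) t = (WithLp.equiv 2 (Fin 2 → ℝ)).symm ![-sin t, cos t] := by
    rw [circleLift, cos_add_pi_div_two, sin_add_pi_div_two]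
  rw [hrot]
  exact (PiLp.continuousLinearEquiv 2 ℝ (fun _ : Fin 2 => ℝ)).symm.hasFDerivAt.comp_hasDerivAt t hpi

section CircleLift

variable {E : Type*} [NormedAddCommGroup E] [NormedSpace ℝ E] {v : E → ℝ} {x : E}

theorem HasFDerivAt.circleLift {v' : E →L[ℝ] ℝ} (hv : HasFDerivAt v v' x) :
    HasFDerivAt (circleLift v) (v'.smulRight (circleLift (· + π / 2) (v x))) x := by
  have h := (hasDerivAt_circleLift_id (v x)).hasFDerivAt.comp x hv
  rwa [ContinuousLinearMap.toSpanSingleton_comp] at h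

theorem norm_fderiv_circleLift (hv : DifferentiableAt ℝ v x) :
    ‖fderiv ℝ (circleLift v) x‖ = ‖fderiv ℝ v x‖ := by
  rw [hv.hasFDerivAt.circleLift.fderiv, ContinuousLinearMap.norm_smulRight_apply,
    norm_circleLift, mul_one]

end CircleLift

theorem circleLift_rpow_fderiv_norm_general (m : ℕ) (α : ℝ) (hα : 0 < α)
    (x : EuclideanSpace ℝ (Fin m)) (hx : x ≠ 0) :
    DifferentiableAt ℝ (circleLift fun y : EuclideanSpace ℝ (Fin m) => ‖y‖ ^ (-α)) x ∧
      ‖fderiv ℝ (circleLift fun y : EuclideanSpace ℝ (Fin m) => ‖y‖ ^ (-α)) x‖ =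
        α * ‖x‖ ^ (-α - 1) := by
  have hnorm : DifferentiableAt ℝ (‖·‖) x := (contDiffAt_norm ℝ hx).differentiableAt one_ne_zero
  have hv := (hasFDerivAt_norm_rpow_of_differentiableAt hx hnorm (-α)).differentiableAt
  refine ⟨hv.hasFDerivAt.circleLift.differentiableAt, ?_⟩
  rw [norm_fderiv_circleLift hv, norm_fderiv_norm_rpow_of_differentiableAt hx hnorm, abs_neg,
    abs_of_pos hα]

/-- For `u(x) = (cos(‖x‖^{-α}), sin(‖x‖^{-α}))` on `ℝᵐ` and `x ≠ 0`, the map `u`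
is differentiable at `x` and `‖Du(x)‖ = α ‖x‖^{-α-1}`. -/
theorem circleLift_rpow_fderiv_norm (m : ℕ) (hm : 1 ≤ m) (α : ℝ) (hα : 0 < α)
    (x : EuclideanSpace ℝ (Fin m)) (hx : x ≠ 0) :
    DifferentiableAt ℝ (circleLift fun y : EuclideanSpace ℝ (Fin m) => ‖y‖ ^ (-α)) x ∧
      ‖fderiv ℝ (circleLift fun y : EuclideanSpace ℝ (Fin m) => ‖y‖ ^ (-α)) x‖ =
        α * ‖x‖ ^ (-α - 1) :=
  circleLift_rpow_fderiv_norm_general m α hα x hx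
end

section
/- Let m ≥ 1 be an integer and let α be a real number with α > 0 and α > m − 2. Define f : ℝ^m → ℝ by f(x) = ‖x‖^{−α}. Then the function x ↦ ‖iteratedFDeriv ℝ 2 f x‖ is not Lebesgue-integrable on the open unit ball B(0,1) ⊆ ℝ^m. -/
/-!
Along the radial direction the Hessian of `‖x‖ ^ p` is `p (p - 1) ‖x‖ ^ (p - 2)`, so for
`p = -α` the operator norm of the second derivative is at least `α (α + 1) ‖x‖ ^ (-α - 2)`.
In polar coordinates `‖x‖ ^ s` is integrable near the origin of `ℝᵐ` exactly when `-m < s`,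
and `-α - 2 < 2 - m - 2 = -m`.
-/

open MeasureTheory Metric Real

section Integrability

variable {E : Type*} [NormedAddCommGroup E] [NormedSpace ℝ E] [FiniteDimensional ℝ E]
  [MeasurableSpace E] [BorelSpace E] [Nontrivial E] (μ : Measure E) [μ.IsAddHaarMeasure]

theorem integrableOn_ball_norm_rpow_iff {s r : ℝ} (hr : 0 < r) :
    IntegrableOn (fun x : E => ‖x‖ ^ s) (ball 0 r) μ ↔ -(Module.finrank ℝ E : ℝ) < s := by
  have hd : 1 ≤ Module.finrank ℝ E := Module.finrank_pos
  rw [integrableOn_fun_norm_addHaar μ (f := fun y => y ^ s),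
    integrableOn_congr_fun (g := fun y => y ^ (s + Module.finrank ℝ E - 1)) _ measurableSet_Ioo,
    intervalIntegral.integrableOn_Ioo_rpow_iff hr]
  · constructor <;> intro h <;> linarith
  · rintro y ⟨hy, -⟩
    simp only [smul_eq_mul]
    rw [← rpow_natCast, ← rpow_add hy]
    congr 1
    push_cast [hd]
    ring

end Integrability

section Hessian

variable {F : Type*} [NormedAddCommGroup F] [InnerProductSpace ℝ F] {x : F}

theorem hasFDerivAt_norm_rpow_of_ne_zero (p : ℝ) (hx : x ≠ 0) :
    HasFDerivAt (fun y : F => ‖y‖ ^ p) ((p * ‖x‖ ^ (p - 2)) • innerSL ℝ x) x := by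
  convert ((hasStrictFDerivAt_norm_sq x).rpow_const (p := p / 2) (by simp [hx])).hasFDerivAt
    using 1
  · ext y
    simp_rw [← rpow_natCast_mul (norm_nonneg _)]
    ring_nf
  · simp_rw [← rpow_natCast_mul (norm_nonneg _), ← Nat.cast_smul_eq_nsmul ℝ, smul_smul]
    ring_nf

theorem fderiv_fderiv_norm_rpow_apply (p : ℝ) (hx : x ≠ 0) (v w : F) :
    fderiv ℝ (fderiv ℝ fun y : F => ‖y‖ ^ p) x v w =
      p * ‖x‖ ^ (p - 2) * inner ℝ v w +
        p * (p - 2) * ‖x‖ ^ (p - 4) * inner ℝ x v * inner ℝ x w := by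
  have hcoeff := (hasFDerivAt_norm_rpow_of_ne_zero (p - 2) hx).const_mul p
  have hsecond := hcoeff.fun_smul (innerSL ℝ : F →L[ℝ] F →L[ℝ] ℝ).hasFDerivAt
  have hfirst : (fderiv ℝ fun y : F => ‖y‖ ^ p) =ᶠ[nhds x]
      fun y => (p * ‖y‖ ^ (p - 2)) • (innerSL ℝ : F →L[ℝ] F →L[ℝ] ℝ) y := by
    filter_upwards [isOpen_compl_singleton.mem_nhds hx] with y hy
    exact (hasFDerivAt_norm_rpow_of_ne_zero p hy).fderiv
  rw [hfirst.fderiv_eq, hsecond.fderiv]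
  simp only [add_apply, smul_apply, ContinuousLinearMap.smulRight_apply, smul_eq_mul]
  -- `innerSL ℝ` is coerced here as an `ℝ`-linear map, so `innerSL_apply_apply` does not fire
  change p * ‖x‖ ^ (p - 2) * inner ℝ v w +
    p * ((p - 2) * ‖x‖ ^ (p - 2 - 2) * inner ℝ x v) * inner ℝ x w = _
  ring_nf

theorem iteratedFDeriv_two_norm_rpow_apply_self (p : ℝ) (hx : x ≠ 0) :
    iteratedFDeriv ℝ 2 (fun y : F => ‖y‖ ^ p) x ![x, x] = p * (p - 1) * ‖x‖ ^ p := by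
  have hxn : 0 < ‖x‖ := norm_pos_iff.2 hx
  rw [iteratedFDeriv_two_apply]
  simp only [Matrix.cons_val_zero, Matrix.cons_val_one, fderiv_fderiv_norm_rpow_apply p hx,
    real_inner_self_eq_norm_sq]
  have h2 : ‖x‖ ^ (p - 2) * ‖x‖ ^ 2 = ‖x‖ ^ p := by
    rw [← rpow_natCast, ← rpow_add hxn]; norm_num
  have h4 : ‖x‖ ^ (p - 4) * (‖x‖ ^ 2 * ‖x‖ ^ 2) = ‖x‖ ^ p := by
    rw [← pow_add, ← rpow_natCast, ← rpow_add hxn]; norm_num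
  linear_combination p * h2 + p * (p - 2) * h4

theorem abs_mul_norm_rpow_le_norm_iteratedFDeriv_two (p : ℝ) (hx : x ≠ 0) :
    |p * (p - 1)| * ‖x‖ ^ (p - 2) ≤ ‖iteratedFDeriv ℝ 2 (fun y : F => ‖y‖ ^ p) x‖ := by
  have hxn : 0 < ‖x‖ := norm_pos_iff.2 hx
  refine le_of_mul_le_mul_right ?_ (pow_pos hxn 2)
  calc |p * (p - 1)| * ‖x‖ ^ (p - 2) * ‖x‖ ^ 2
      = ‖iteratedFDeriv ℝ 2 (fun y : F => ‖y‖ ^ p) x ![x, x]‖ := by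
        rw [iteratedFDeriv_two_norm_rpow_apply_self p hx, norm_mul, norm_of_nonneg
          (rpow_nonneg hxn.le p), mul_assoc, ← rpow_natCast, ← rpow_add hxn, Real.norm_eq_abs]
        norm_num
    _ ≤ ‖iteratedFDeriv ℝ 2 (fun y : F => ‖y‖ ^ p) x‖ * ∏ i, ‖![x, x] i‖ :=
        ContinuousMultilinearMap.le_opNorm _ _
    _ = ‖iteratedFDeriv ℝ 2 (fun y : F => ‖y‖ ^ p) x‖ * ‖x‖ ^ 2 := by
        simp [Fin.prod_univ_two, sq]

end Hessian

/-- For `f(x) = ‖x‖^{-α}` on `ℝᵐ` with `α > 0` and `α > m - 2`, the norm of the second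
iterated Fréchet derivative of `f` is not Lebesgue-integrable on the unit ball. -/
theorem rpow_not_integrable_second (m : ℕ) (hm : 1 ≤ m) (α : ℝ) (hα : 0 < α)
    (hα' : (m : ℝ) - 2 < α) :
    ¬ IntegrableOn
        (fun x : EuclideanSpace ℝ (Fin m) =>
          ‖iteratedFDeriv ℝ 2 (fun y : EuclideanSpace ℝ (Fin m) => ‖y‖ ^ (-α)) x‖)
        (Metric.ball 0 1) volume := by
  intro hint
  obtain ⟨n, rfl⟩ : ∃ n, m = n + 1 := ⟨m - 1, by omega⟩
  have hc : 0 < |-α * (-α - 1)| := abs_pos.2 (by nlinarith)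
  have hpow : IntegrableOn (fun x : EuclideanSpace ℝ (Fin (n + 1)) => ‖x‖ ^ (-α - 2))
      (ball 0 1) volume := by
    refine (hint.const_mul (|-α * (-α - 1)|⁻¹)).mono'
      (measurable_norm.pow_const _).aestronglyMeasurable ?_
    filter_upwards [ae_restrict_of_ae (compl_mem_ae_iff.2 (measure_singleton 0))] with x hx
    rw [norm_of_nonneg (rpow_nonneg (norm_nonneg x) _), le_inv_mul_iff₀ hc]
    exact abs_mul_norm_rpow_le_norm_iteratedFDeriv_two (-α) hx
  rw [integrableOn_ball_norm_rpow_iff volume one_pos, finrank_euclideanSpace_fin] at hpow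
  push_cast at hpow hα'
  linarith
end

section
/- Let m ≥ 1 be an integer and let β > α > 0 be real numbers. Define u : ℝ^m → ℝ by u(x) = ‖x‖^{−α}·sin(‖x‖^{β}). Then there exists δ ∈ (0,1) such that for every x ∈ ℝ^m with 0 < ‖x‖ ≤ δ, u is differentiable at x and ‖fderiv ℝ u x‖ ≥ ((β − α)/2)·‖x‖^{β−α−1}. -/
/-!
The function is radial, `u = g ∘ ‖·‖` with `g r = r^{-α} sin (r^β)`, and the norm has a derivative
of norm one away from the origin, so `‖Du(x)‖ = |g'(‖x‖)|`. In
`g'(r) = β r^{β-α-1} cos (r^β) - α r^{-α-1} sin (r^β)` the bound `|sin t| ≤ t` makes the second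
term at most `α r^{β-α-1}`, while `cos (r^β) → 1` as `r → 0⁺`; since `β > α`, this leaves
`|g'(r)| ≥ ((β - α)/2) r^{β-α-1}` for small `r`.
-/

open Real Filter Set Topology

theorem norm_fderiv_comp_norm {E : Type*} [NormedAddCommGroup E] [NormedSpace ℝ E] [Nontrivial E]
    {f : ℝ → ℝ} {f' : ℝ} {x : E} (hf : HasDerivAt f f' ‖x‖)
    (hx : DifferentiableAt ℝ (‖·‖) x) :
    ‖fderiv ℝ (fun y => f ‖y‖) x‖ = |f'| := by
  have hfx : HasFDerivAt (fun y => f ‖y‖) (f' • fderiv ℝ (‖·‖) x) x :=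
    hf.comp_hasFDerivAt x hx.hasFDerivAt
  rw [hfx.fderiv, norm_smul, norm_fderiv_norm hx, mul_one, Real.norm_eq_abs]

section Profile

variable {α β r : ℝ}

theorem hasDerivAt_rpow_neg_mul_sin_rpow (hr : 0 < r) :
    HasDerivAt (fun s => s ^ (-α) * sin (s ^ β))
      (-α * r ^ (-α - 1) * sin (r ^ β) + r ^ (-α) * (cos (r ^ β) * (β * r ^ (β - 1)))) r := by
  have hpow : HasDerivAt (fun s => s ^ (-α)) (-α * r ^ (-α - 1)) r := by
    simpa using hasDerivAt_rpow_const (p := -α) (Or.inl hr.ne')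
  exact hpow.mul (hasDerivAt_rpow_const (p := β) (Or.inl hr.ne')).sin

theorem mul_cos_rpow_sub_mul_rpow_le_abs (hα : 0 ≤ α) (hr : 0 < r) :
    (β * cos (r ^ β) - α) * r ^ (β - α - 1) ≤
      |-α * r ^ (-α - 1) * sin (r ^ β) + r ^ (-α) * (cos (r ^ β) * (β * r ^ (β - 1)))| := by
  have hsin : |sin (r ^ β)| ≤ r ^ β := by
    simpa [abs_of_pos (rpow_pos_of_pos hr β)] using abs_sin_le_abs (x := r ^ β)
  have hsin_term : |-α * r ^ (-α - 1) * sin (r ^ β)| ≤ α * r ^ (β - α - 1) := by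
    calc |-α * r ^ (-α - 1) * sin (r ^ β)| = α * r ^ (-α - 1) * |sin (r ^ β)| := by
          rw [abs_mul, abs_mul, abs_neg, abs_of_nonneg hα, abs_of_pos (rpow_pos_of_pos hr _)]
      _ ≤ α * r ^ (-α - 1) * r ^ β := by gcongr
      _ = α * r ^ (β - α - 1) := by rw [mul_assoc, ← rpow_add hr]; ring_nf
  have hcos_term : r ^ (-α) * (cos (r ^ β) * (β * r ^ (β - 1))) =
      β * cos (r ^ β) * r ^ (β - α - 1) := by
    rw [show β - α - 1 = -α + (β - 1) by ring, rpow_add hr]; ring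
  rw [hcos_term]
  linarith [neg_abs_le (-α * r ^ (-α - 1) * sin (r ^ β)),
    le_abs_self (-α * r ^ (-α - 1) * sin (r ^ β) + β * cos (r ^ β) * r ^ (β - α - 1))]

theorem eventually_half_sub_le_mul_cos_rpow_sub (hβ : 0 < β) (hαβ : α < β) :
    ∀ᶠ r in 𝓝[>] 0, (β - α) / 2 ≤ β * cos (r ^ β) - α := by
  have hcont : ContinuousAt (fun r : ℝ => β * cos (r ^ β) - α) 0 :=
    ((continuous_cos.continuousAt.comp (continuousAt_rpow_const 0 β (Or.inr hβ.le))).const_mul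
      β).sub continuousAt_const
  have hlim : Tendsto (fun r : ℝ => β * cos (r ^ β) - α) (𝓝[>] 0) (𝓝 (β - α)) := by
    simpa [zero_rpow hβ.ne'] using hcont.tendsto.mono_left nhdsWithin_le_nhds
  exact hlim.eventually_const_le (by linarith)

end Profile

theorem oscillating_fderiv_lower_bound_general (m : ℕ) (α β : ℝ)
    (hα : 0 < α) (hβ : α < β) :
    ∃ δ : ℝ, 0 < δ ∧ δ < 1 ∧
      ∀ x : EuclideanSpace ℝ (Fin m), 0 < ‖x‖ → ‖x‖ ≤ δ →
        DifferentiableAt ℝ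
            (fun y : EuclideanSpace ℝ (Fin m) => ‖y‖ ^ (-α) * Real.sin (‖y‖ ^ β)) x ∧
          ‖fderiv ℝ
              (fun y : EuclideanSpace ℝ (Fin m) => ‖y‖ ^ (-α) * Real.sin (‖y‖ ^ β)) x‖ ≥
            (β - α) / 2 * ‖x‖ ^ (β - α - 1) := by
  obtain ⟨δ, hδ, hsmall⟩ := mem_nhdsGT_iff_exists_Ioc_subset.1
    (eventually_half_sub_le_mul_cos_rpow_sub (hα.trans hβ) hβ)
  refine ⟨min δ (1 / 2), lt_min hδ (by norm_num), (min_le_right _ _).trans_lt (by norm_num), ?_⟩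
  intro x hx hxδ
  have hx0 : x ≠ 0 := norm_pos_iff.1 hx
  have : Nontrivial (EuclideanSpace ℝ (Fin m)) := nontrivial_of_ne x 0 hx0
  have hnorm : DifferentiableAt ℝ (‖·‖) x :=
    (contDiffAt_norm ℝ hx0 (n := 1)).differentiableAt one_ne_zero
  have hg := hasDerivAt_rpow_neg_mul_sin_rpow (α := α) (β := β) hx
  refine ⟨hg.differentiableAt.comp x hnorm, ?_⟩
  rw [norm_fderiv_comp_norm hg hnorm, ge_iff_le]
  calc (β - α) / 2 * ‖x‖ ^ (β - α - 1) ≤ (β * cos (‖x‖ ^ β) - α) * ‖x‖ ^ (β - α - 1) :=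
        mul_le_mul_of_nonneg_right (hsmall ⟨hx, hxδ.trans (min_le_left _ _)⟩)
          (rpow_pos_of_pos hx _).le
    _ ≤ _ := mul_cos_rpow_sub_mul_rpow_le_abs hα.le hx

/-- For the oscillating function `u(x) = ‖x‖^{-α} sin(‖x‖^β)` on `ℝᵐ` with
`β > α > 0`, there is `δ ∈ (0,1)` such that for every `x` with `0 < ‖x‖ ≤ δ`, `u` is
differentiable at `x` and `‖Du(x)‖ ≥ ((β - α)/2) ‖x‖^{β - α - 1}`. -/
theorem oscillating_fderiv_lower_bound (m : ℕ) (hm : 1 ≤ m) (α β : ℝ)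
    (hα : 0 < α) (hβ : α < β) :
    ∃ δ : ℝ, 0 < δ ∧ δ < 1 ∧
      ∀ x : EuclideanSpace ℝ (Fin m), 0 < ‖x‖ → ‖x‖ ≤ δ →
        DifferentiableAt ℝ
            (fun y : EuclideanSpace ℝ (Fin m) => ‖y‖ ^ (-α) * Real.sin (‖y‖ ^ β)) x ∧
          ‖fderiv ℝ
              (fun y : EuclideanSpace ℝ (Fin m) => ‖y‖ ^ (-α) * Real.sin (‖y‖ ^ β)) x‖ ≥
            (β - α) / 2 * ‖x‖ ^ (β - α - 1) :=
  oscillating_fderiv_lower_bound_general m α β hα hβ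
end

section
/- Let m ≥ 1 and k ≥ 1 be integers and let p ≥ 1 be a real number with k·p < m. Define the hedgehog map u : ℝ^m → ℝ^m by u(x) = ‖x‖⁻¹ • x (with u(0) = 0 by the convention 0⁻¹ = 0). Then the function x ↦ ‖iteratedFDeriv ℝ k u x‖^p is Lebesgue-integrable on the open unit ball B(0,1) ⊆ ℝ^m. -/
open MeasureTheory Set Metric

variable {E : Type*} [NormedAddCommGroup E] [NormedSpace ℝ E] [FiniteDimensional ℝ E]
  [MeasurableSpace E] [BorelSpace E] [Nontrivial E]

/-- `‖x‖ ^ (-s)` is integrable on the unit ball when `s < dim`. -/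
lemma aux_integrableOn_rpow_norm_ball {μ : Measure E} [μ.IsAddHaarMeasure] {s : ℝ}
    (hs0 : 0 ≤ s) (hsm : s < Module.finrank ℝ E) :
    IntegrableOn (fun x : E => ‖x‖ ^ (-s)) (Metric.ball 0 1) μ := by
  set n := Module.finrank ℝ E
  constructor
  · have h0 : μ ({0} : Set E) = 0 := measure_singleton 0
    have hae : (Metric.ball (0:E) 1 \ {0} : Set E) =ᵐ[μ] Metric.ball (0:E) 1 :=
      diff_ae_eq_self.2 (measure_mono_null inter_subset_right h0)
    rw [← Measure.restrict_congr_set hae]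
    refine ContinuousOn.aestronglyMeasurable ?_
      (measurableSet_ball.diff (measurableSet_singleton 0))
    intro x hx
    exact (ContinuousAt.rpow_const continuous_norm.continuousAt
      (Or.inl (norm_ne_zero_iff.2 (by simpa using hx.2)))).continuousWithinAt
  · rw [hasFiniteIntegral_iff_norm]
    set A : ℕ → Set E := fun j => Metric.ball (0:E) ((2⁻¹:ℝ) ^ j) \ Metric.ball 0 ((2⁻¹:ℝ) ^ (j + 1)) with hA
    have hr0 : (0:ℝ) < 2⁻¹ := by norm_num
    have hcover : Metric.ball (0:E) 1 ⊆ {0} ∪ ⋃ j, A j := by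
      intro x hx
      rcases eq_or_ne x 0 with h0 | h0
      · exact Or.inl h0
      · have hxpos : 0 < ‖x‖ := norm_pos_iff.2 h0
        have hx1 : ‖x‖ < 1 := by simpa using hx
        have hex : ∃ nn : ℕ, (2⁻¹:ℝ) ^ nn ≤ ‖x‖ := by
          obtain ⟨nn, hnn⟩ := exists_pow_lt_of_lt_one hxpos (by norm_num : (2⁻¹:ℝ) < 1)
          exact ⟨nn, hnn.le⟩
        have hNspec : (2⁻¹:ℝ) ^ (Nat.find hex) ≤ ‖x‖ := Nat.find_spec hex
        have hN1 : 1 ≤ Nat.find hex := by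
          rcases Nat.eq_zero_or_pos (Nat.find hex) with h | h
          · exfalso; rw [h] at hNspec; simp at hNspec; linarith
          · exact h
        refine Or.inr (mem_iUnion.2 ⟨Nat.find hex - 1, ?_⟩)
        constructor
        · have : ¬ (2⁻¹:ℝ) ^ (Nat.find hex - 1) ≤ ‖x‖ := Nat.find_min hex (by omega)
          simpa [mem_ball_zero_iff] using lt_of_not_ge this
        · have heq : Nat.find hex - 1 + 1 = Nat.find hex := by omega
          rw [mem_ball_zero_iff, heq]
          exact not_lt.2 hNspec
    have key : ∀ x : E, ENNReal.ofReal ‖(‖x‖ ^ (-s))‖ = ENNReal.ofReal (‖x‖ ^ (-s)) := by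
      intro x
      rw [Real.norm_of_nonneg (Real.rpow_nonneg (norm_nonneg x) _)]
    set B := μ (Metric.ball (0:E) 1) with hB
    set q : ℝ := (2:ℝ) ^ (s - n) with hq
    have hq0 : 0 ≤ q := Real.rpow_nonneg (by norm_num) _
    have hq1 : q < 1 := Real.rpow_lt_one_of_one_lt_of_neg (by norm_num) (by
      have : (0:ℝ) < n := lt_of_le_of_lt hs0 hsm
      linarith)
    have e : ∀ j : ℕ, ((2⁻¹:ℝ) ^ (j+1)) ^ (-s) * ((2⁻¹:ℝ) ^ j) ^ n = 2 ^ s * q ^ j := by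
      intro j
      have h2 : (0:ℝ) ≤ 2 := by norm_num
      have l1 : ∀ i : ℕ, ((2⁻¹:ℝ) ^ i) = (2:ℝ) ^ (-(i:ℝ)) := fun i => by
        rw [Real.rpow_neg h2, Real.rpow_natCast, inv_pow]
      have l2 : ∀ (a : ℝ) (i : ℕ), ((2:ℝ) ^ a) ^ i = (2:ℝ) ^ (a * i) := fun a i => by
        rw [← Real.rpow_natCast ((2:ℝ) ^ a) i, ← Real.rpow_mul h2]
      rw [l1 (j+1), l1 j, ← Real.rpow_mul h2, l2, hq, l2,
        ← Real.rpow_add (by norm_num : (0:ℝ) < 2), ← Real.rpow_add (by norm_num : (0:ℝ) < 2)]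
      congr 1
      push_cast
      ring
    have hterm : ∀ j : ℕ, ∫⁻ x in A j, ENNReal.ofReal ‖(‖x‖ ^ (-s))‖ ∂μ
        ≤ ENNReal.ofReal ((2:ℝ) ^ s * q ^ j) * B := by
      intro j
      have hAj : MeasurableSet (A j) := measurableSet_ball.diff measurableSet_ball
      have hub : ∀ x ∈ A j, ENNReal.ofReal ‖(‖x‖ ^ (-s))‖
          ≤ ENNReal.ofReal (((2⁻¹:ℝ) ^ (j+1)) ^ (-s)) := by
        intro x hx
        rw [key x]
        apply ENNReal.ofReal_le_ofReal
        have hge : (2⁻¹:ℝ) ^ (j+1) ≤ ‖x‖ := by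
          have := hx.2
          simpa [mem_ball_zero_iff, not_lt] using this
        exact Real.rpow_le_rpow_of_nonpos (pow_pos hr0 _) hge (neg_nonpos.2 hs0)
      calc ∫⁻ x in A j, ENNReal.ofReal ‖(‖x‖ ^ (-s))‖ ∂μ
          ≤ ∫⁻ _x in A j, ENNReal.ofReal (((2⁻¹:ℝ) ^ (j+1)) ^ (-s)) ∂μ :=
            setLIntegral_mono' hAj hub
        _ = ENNReal.ofReal (((2⁻¹:ℝ) ^ (j+1)) ^ (-s)) * μ (A j) := setLIntegral_const _ _
        _ ≤ ENNReal.ofReal (((2⁻¹:ℝ) ^ (j+1)) ^ (-s)) * μ (Metric.ball (0:E) ((2⁻¹:ℝ) ^ j)) := by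
            gcongr
            exact diff_subset
        _ = ENNReal.ofReal (((2⁻¹:ℝ) ^ (j+1)) ^ (-s)) * (ENNReal.ofReal (((2⁻¹:ℝ) ^ j) ^ n) * B) := by
            rw [Measure.addHaar_ball μ 0 (by positivity)]
        _ = ENNReal.ofReal ((2:ℝ) ^ s * q ^ j) * B := by
            rw [← mul_assoc, ← ENNReal.ofReal_mul (by positivity)]
            congr 2
            exact e j
    calc ∫⁻ x in Metric.ball (0:E) 1, ENNReal.ofReal ‖(‖x‖ ^ (-s))‖ ∂μ
        ≤ ∫⁻ x in {0} ∪ ⋃ j, A j, ENNReal.ofReal ‖(‖x‖ ^ (-s))‖ ∂μ :=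
          lintegral_mono_set hcover
      _ ≤ (∫⁻ x in ({0} : Set E), ENNReal.ofReal ‖(‖x‖ ^ (-s))‖ ∂μ)
          + ∫⁻ x in ⋃ j, A j, ENNReal.ofReal ‖(‖x‖ ^ (-s))‖ ∂μ := lintegral_union_le _ _ _
      _ = ∫⁻ x in ⋃ j, A j, ENNReal.ofReal ‖(‖x‖ ^ (-s))‖ ∂μ := by
          rw [setLIntegral_measure_zero _ _ (measure_singleton 0), zero_add]
      _ ≤ ∑' j, ∫⁻ x in A j, ENNReal.ofReal ‖(‖x‖ ^ (-s))‖ ∂μ := lintegral_iUnion_le _ _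
      _ ≤ ∑' j, ENNReal.ofReal ((2:ℝ) ^ s * q ^ j) * B := ENNReal.tsum_le_tsum hterm
      _ = ∑' j : ℕ, (ENNReal.ofReal ((2:ℝ) ^ s) * B) * ENNReal.ofReal q ^ j := by
          refine tsum_congr fun j => ?_
          rw [ENNReal.ofReal_mul (by positivity), ENNReal.ofReal_pow hq0]
          ring
      _ = (ENNReal.ofReal ((2:ℝ) ^ s) * B) * (1 - ENNReal.ofReal q)⁻¹ := by
          rw [ENNReal.tsum_mul_left, ENNReal.tsum_geometric]
      _ < ⊤ := by
          apply ENNReal.mul_lt_top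
          · exact ENNReal.mul_lt_top ENNReal.ofReal_lt_top measure_ball_lt_top
          · rw [ENNReal.inv_lt_top]
            rw [tsub_pos_iff_lt]
            exact ENNReal.ofReal_lt_one.2 hq1

/-- The hedgehog map `u(x) = x/‖x‖` belongs to `W^{k,p}` of the unit ball whenever
`kp < m`: the function `x ↦ ‖D^k u(x)‖^p` is Lebesgue-integrable on `B(0,1) ⊆ ℝᵐ`. -/
theorem hedgehog_integrable (m k : ℕ) (hm : 1 ≤ m) (hk : 1 ≤ k) (p : ℝ) (hp : 1 ≤ p)
    (hkp : (k : ℝ) * p < m) :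
    IntegrableOn
      (fun x : EuclideanSpace ℝ (Fin m) =>
        ‖iteratedFDeriv ℝ k (fun y : EuclideanSpace ℝ (Fin m) => ‖y‖⁻¹ • y) x‖ ^ p)
      (Metric.ball 0 1) volume := by
  classical
  haveI : Nontrivial (EuclideanSpace ℝ (Fin m)) := by
    refine nontrivial_of_ne (EuclideanSpace.single ⟨0, hm⟩ (1:ℝ)) 0 ?_
    intro h
    have := congrArg (fun v => v ⟨0, hm⟩) h
    simp [EuclideanSpace.single_apply] at this
  set u : EuclideanSpace ℝ (Fin m) → EuclideanSpace ℝ (Fin m) := fun y => ‖y‖⁻¹ • y with hu_def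
  set S : Set (EuclideanSpace ℝ (Fin m)) := {0}ᶜ with hS_def
  have hSopen : IsOpen S := isOpen_compl_singleton
  have hu : ContDiffOn ℝ (⊤ : ℕ∞) u S := by
    intro x hx
    have hx0 : x ≠ 0 := hx
    have h1 : ContDiffAt ℝ (⊤ : ℕ∞) (fun y : EuclideanSpace ℝ (Fin m) => ‖y‖) x := contDiffAt_norm ℝ hx0
    exact ((h1.inv (norm_ne_zero_iff.2 hx0)).smul contDiffAt_id).contDiffWithinAt
  have hgcont : ContinuousOn (fun x => iteratedFDeriv ℝ k u x) S := by
    have h1 := hu.continuousOn_iteratedFDerivWithin (m := k) (mod_cast le_top) hSopen.uniqueDiffOn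
    exact h1.congr fun x hx => (iteratedFDerivWithin_of_isOpen k hSopen hx).symm
  have hsphS : Metric.sphere (0 : EuclideanSpace ℝ (Fin m)) 1 ⊆ S := by
    intro x hx
    have : ‖x‖ = 1 := by simpa using hx
    intro h0
    rw [show x = 0 from h0] at this
    simp at this
  obtain ⟨C, hC⟩ := (isCompact_sphere (0 : EuclideanSpace ℝ (Fin m)) 1).exists_bound_of_continuousOn
    (hgcont.mono hsphS)
  set C' := max C 0 with hC'_def
  have hC'nn : 0 ≤ C' := le_max_right C 0
  have hC' : ∀ x ∈ Metric.sphere (0 : EuclideanSpace ℝ (Fin m)) 1,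
      ‖iteratedFDeriv ℝ k u x‖ ≤ C' := fun x hx => (hC x hx).trans (le_max_left C 0)
  have hbound : ∀ x : EuclideanSpace ℝ (Fin m), x ≠ 0 →
      ‖iteratedFDeriv ℝ k u x‖ ≤ C' * (‖x‖⁻¹) ^ k := by
    intro x hx
    have hxS : x ∈ S := hx
    have hxn : (0:ℝ) < ‖x‖ := norm_pos_iff.2 hx
    set c : ℝ := ‖x‖⁻¹ with hc
    have hcpos : 0 < c := inv_pos.2 hxn
    have hc0 : c ≠ 0 := hcpos.ne'
    set L : EuclideanSpace ℝ (Fin m) →L[ℝ] EuclideanSpace ℝ (Fin m) :=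
      c • ContinuousLinearMap.id ℝ _ with hL
    have hLapply : ∀ z, L z = c • z := fun z => rfl
    have hLx : L x ∈ Metric.sphere (0 : EuclideanSpace ℝ (Fin m)) 1 := by
      rw [mem_sphere_zero_iff_norm, hLapply, norm_smul, Real.norm_eq_abs, abs_of_pos hcpos, hc,
        inv_mul_cancel₀ hxn.ne']
    have hLxS : L x ∈ S := hsphS hLx
    have hpre : L ⁻¹' S = S := by
      ext z
      simp [hS_def, hLapply, smul_eq_zero, hc0]
    have hcomp_fun : u ∘ L = u := by
      funext z
      simp only [Function.comp_apply, hLapply, hu_def]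
      rw [norm_smul, Real.norm_eq_abs, abs_of_pos hcpos, smul_smul, mul_inv]
      congr 1
      rw [mul_comm c⁻¹ ‖z‖⁻¹, mul_assoc, inv_mul_cancel₀ hc0, mul_one]
    have hchain : iteratedFDeriv ℝ k u x
        = (iteratedFDeriv ℝ k u (L x)).compContinuousLinearMap (fun _ => L) := by
      calc iteratedFDeriv ℝ k u x = iteratedFDerivWithin ℝ k u S x :=
            (iteratedFDerivWithin_of_isOpen k hSopen hxS).symm
        _ = iteratedFDerivWithin ℝ k (u ∘ L) (L ⁻¹' S) x := by rw [hcomp_fun, hpre]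
        _ = (iteratedFDerivWithin ℝ k u S (L x)).compContinuousLinearMap (fun _ => L) :=
            L.iteratedFDerivWithin_comp_right hu hSopen.uniqueDiffOn
              (by rw [hpre]; exact hSopen.uniqueDiffOn) hLxS (mod_cast le_top)
        _ = (iteratedFDeriv ℝ k u (L x)).compContinuousLinearMap (fun _ => L) := by
            rw [iteratedFDerivWithin_of_isOpen k hSopen hLxS]
    have hnormL : ‖L‖ ≤ c := by
      rw [hL]
      calc ‖c • ContinuousLinearMap.id ℝ (EuclideanSpace ℝ (Fin m))‖
          ≤ ‖c‖ * ‖ContinuousLinearMap.id ℝ (EuclideanSpace ℝ (Fin m))‖ :=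
            ContinuousLinearMap.opNorm_smul_le _ _
        _ ≤ c * 1 := by
            rw [Real.norm_eq_abs, abs_of_pos hcpos]
            gcongr
            exact ContinuousLinearMap.norm_id_le
        _ = c := mul_one c
    rw [hchain]
    calc ‖(iteratedFDeriv ℝ k u (L x)).compContinuousLinearMap (fun _ => L)‖
        ≤ ‖iteratedFDeriv ℝ k u (L x)‖ * ∏ _i : Fin k, ‖L‖ :=
          ContinuousMultilinearMap.norm_compContinuousLinearMap_le _ _
      _ ≤ C' * c ^ k := by
          rw [Finset.prod_const, Finset.card_univ, Fintype.card_fin]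
          gcongr
          · exact hC' _ hLx
  -- conclude
  have hfin : ((k : ℝ) * p) < Module.finrank ℝ (EuclideanSpace ℝ (Fin m)) := by
    rw [finrank_euclideanSpace_fin]; exact hkp
  have hint : IntegrableOn
      (fun x : EuclideanSpace ℝ (Fin m) => C' ^ p * ‖x‖ ^ (-((k : ℝ) * p)))
      (Metric.ball 0 1) volume :=
    (aux_integrableOn_rpow_norm_ball (by positivity) hfin).const_mul _
  refine Integrable.mono' hint ?_ ?_
  · have h0 : volume ({0} : Set (EuclideanSpace ℝ (Fin m))) = 0 := measure_singleton 0
    have hae : (Metric.ball (0 : EuclideanSpace ℝ (Fin m)) 1 \ {0} :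
          Set (EuclideanSpace ℝ (Fin m)))
        =ᵐ[volume] Metric.ball (0 : EuclideanSpace ℝ (Fin m)) 1 :=
      diff_ae_eq_self.2 (measure_mono_null inter_subset_right h0)
    rw [← Measure.restrict_congr_set hae]
    refine ContinuousOn.aestronglyMeasurable ?_
      (measurableSet_ball.diff (measurableSet_singleton 0))
    have hcon : ContinuousOn (fun x => ‖iteratedFDeriv ℝ k u x‖ ^ p) S :=
      hgcont.norm.rpow_const fun x _ => Or.inr (by linarith)
    exact hcon.mono fun x hx => hx.2
  · have hae0 : ∀ᵐ x ∂(volume.restrict (Metric.ball (0 : EuclideanSpace ℝ (Fin m)) 1)),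
        x ≠ 0 := by
      refine ae_restrict_of_ae ?_
      have hset : {x : EuclideanSpace ℝ (Fin m) | ¬ x ≠ 0} = ({0} : Set (EuclideanSpace ℝ (Fin m))) := by ext z; simp
      rw [ae_iff, hset]
      exact measure_singleton 0
    filter_upwards [hae0] with x hx
    have h1 : ‖iteratedFDeriv ℝ k u x‖ ≤ C' * ‖x‖⁻¹ ^ k := hbound x hx
    have h2 : (0:ℝ) ≤ ‖iteratedFDeriv ℝ k u x‖ := norm_nonneg _
    rw [Real.norm_of_nonneg (Real.rpow_nonneg h2 p)]
    calc ‖iteratedFDeriv ℝ k u x‖ ^ p ≤ (C' * ‖x‖⁻¹ ^ k) ^ p :=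
          Real.rpow_le_rpow h2 h1 (by linarith)
      _ = C' ^ p * (‖x‖⁻¹ ^ k) ^ p := Real.mul_rpow hC'nn (by positivity)
      _ = C' ^ p * ‖x‖ ^ (-((k : ℝ) * p)) := by
          congr 1
          have l1 : (‖x‖⁻¹) ^ k = ‖x‖ ^ (-(k:ℝ)) := by
            rw [Real.rpow_neg (norm_nonneg x), Real.rpow_natCast, inv_pow]
          rw [l1, ← Real.rpow_mul (norm_nonneg x)]
          congr 1
          ring
end
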